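/- Let g : V → ℝ be a convex function that is 1-Lipschitz with respect to ‖·‖, and let g* denote its Legendre–Fenchel transform. Suppose there exist x, z in the dual unit ball B°, and λ ∈ (0,1), such that the point y := (1−λ)x + λz satisfies g*(y) < (1−λ)g*(x) + λg*(z). Then g is the pointwise minimum of two 1-Lipschitz functions on V, each of which is different from g. -/
import Mathlib


open Filter Topology Set

noncomputable section

/-- The dual unit ball `B° = {y ∈ V* : ⟨y,x⟩ ≥ −1 for all x ∈ B}`. -/
def dualBall (V : Type*) [NormedAddCommGroup V] [NormedSpace ℝ V] :
    Set (V →L[ℝ] ℝ) := {y | ∀ x : V, ‖x‖ ≤ 1 → -1 ≤ y x}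

/-- The Legendre–Fenchel transform of `g : V → ℝ`, with values in `ℝ ∪ {+∞}`:
`g*(y) = sup_{x ∈ V} (⟨y,x⟩ − g(x))`. -/
def legendre {V : Type*} [NormedAddCommGroup V] [NormedSpace ℝ V] (g : V → ℝ) :
    (V →L[ℝ] ℝ) → EReal :=
  fun y => ⨆ x : V, ((y x - g x : ℝ) : EReal)

/-- An element of the dual ball has operator norm at most one pointwise. -/
lemma dualBall_abs_le {V : Type*} [NormedAddCommGroup V] [NormedSpace ℝ V]
    {w : V →L[ℝ] ℝ} (hw : w ∈ dualBall V) (v : V) : |w v| ≤ ‖v‖ := by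
  rcases eq_or_ne v 0 with rfl | hv
  · simp
  · have hnv : (0:ℝ) < ‖v‖ := norm_pos_iff.mpr hv
    have h1 : -1 ≤ w (‖v‖⁻¹ • v) := by
      apply hw
      rw [norm_smul, norm_inv, norm_norm]
      rw [inv_mul_cancel₀ (ne_of_gt hnv)]
    have h2 : -1 ≤ w (‖v‖⁻¹ • (-v)) := by
      apply hw
      rw [norm_smul, norm_inv, norm_norm, norm_neg]
      rw [inv_mul_cancel₀ (ne_of_gt hnv)]
    rw [map_smul, smul_eq_mul] at h1
    rw [map_smul, smul_eq_mul, map_neg] at h2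
    rw [abs_le]
    constructor
    · nlinarith [mul_le_mul_of_nonneg_left h1 hnv.le, mul_inv_cancel₀ (ne_of_gt hnv)]
    · nlinarith [mul_le_mul_of_nonneg_left h2 hnv.le, mul_inv_cancel₀ (ne_of_gt hnv)]

/-- Selection of real lower bounds whose convex combination still exceeds `M`. -/
lemma pick_aux (l M : ℝ) (hl0 : 0 < l) (hl1 : l < 1) (a b : EReal) (ha : a ≠ ⊥) (hb : b ≠ ⊥)
    (h : (M:EReal) < ((1 - l : ℝ):EReal) * a + ((l:ℝ):EReal) * b) :
    ∃ s t : ℝ, (s:EReal) < a ∧ (t:EReal) < b ∧ M < (1-l)*s + l*t := by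
  have h1l : (0:ℝ) < 1 - l := by linarith
  induction a using EReal.rec with
  | bot => exact absurd rfl ha
  | top =>
    induction b using EReal.rec with
    | bot => exact absurd rfl hb
    | top =>
      exact ⟨M + 1, M + 1, EReal.coe_lt_top _, EReal.coe_lt_top _, by nlinarith⟩
    | coe B =>
      refine ⟨(M - l*(B-1))/(1-l) + 1, B - 1, EReal.coe_lt_top _, by exact_mod_cast (by linarith : B - 1 < B), ?_⟩
      have key : (1-l) * ((M - l*(B-1))/(1-l)) = M - l*(B-1) := by field_simp
      nlinarith
  | coe A =>
    induction b using EReal.rec with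
    | bot => exact absurd rfl hb
    | top =>
      refine ⟨A - 1, (M - (1-l)*(A-1))/l + 1, by exact_mod_cast (by linarith : A - 1 < A), EReal.coe_lt_top _, ?_⟩
      have key : l * ((M - (1-l)*(A-1))/l) = M - (1-l)*(A-1) := by field_simp
      nlinarith
    | coe B =>
      rw [← EReal.coe_mul, ← EReal.coe_mul, ← EReal.coe_add, EReal.coe_lt_coe_iff] at h
      set e := ((1-l)*A + l*B - M) / 2 with he
      have he0 : 0 < e := by rw [he]; linarith
      refine ⟨A - e, B - e, by exact_mod_cast (by linarith : A - e < A),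
        by exact_mod_cast (by linarith : B - e < B), by nlinarith⟩

/-- If `g : V → ℝ` is convex and 1-Lipschitz and its Legendre–Fenchel transform fails
to be affine on a segment of the dual ball — i.e. there are `x, z ∈ B°` and
`λ ∈ (0,1)` with `g*((1−λ)x + λz) < (1−λ)g*(x) + λg*(z)` — then `g` is the pointwise
minimum of two 1-Lipschitz functions, each different from `g`. -/
theorem min_of_two_lipschitz (V : Type*) [NormedAddCommGroup V] [NormedSpace ℝ V]
    [FiniteDimensional ℝ V] (g : V → ℝ)
    (hgconv : ConvexOn ℝ Set.univ g)
    (hglip : ∀ a b : V, |g a - g b| ≤ ‖a - b‖)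
    (x z : V →L[ℝ] ℝ) (hx : x ∈ dualBall V) (hz : z ∈ dualBall V)
    (l : ℝ) (hl : l ∈ Set.Ioo (0 : ℝ) 1)
    (hy : legendre g ((1 - l) • x + l • z) <
      ((1 - l : ℝ) : EReal) * legendre g x + ((l : ℝ) : EReal) * legendre g z) :
    ∃ g₁ g₂ : V → ℝ,
      (∀ a b : V, |g₁ a - g₁ b| ≤ ‖a - b‖) ∧
      (∀ a b : V, |g₂ a - g₂ b| ≤ ‖a - b‖) ∧
      g₁ ≠ g ∧ g₂ ≠ g ∧ ∀ p : V, g p = min (g₁ p) (g₂ p) := by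
  obtain ⟨hl0, hl1⟩ := hl
  set y : V →L[ℝ] ℝ := (1 - l) • x + l • z with hydef
  -- the value of the Legendre transform at y is finite
  have hYbot : legendre g y ≠ ⊥ := by
    intro hbot
    have h0 : ((y 0 - g 0 : ℝ) : EReal) ≤ legendre g y := le_iSup (fun p : V => ((y p - g p : ℝ) : EReal)) 0
    rw [hbot, le_bot_iff] at h0
    exact (EReal.coe_ne_bot _) h0
  have hYtop : legendre g y ≠ ⊤ := by
    intro htop
    rw [htop] at hy
    exact not_top_lt hy
  set M : ℝ := (legendre g y).toReal with hM
  have hYM : legendre g y = (M : EReal) := (EReal.coe_toReal hYtop hYbot).symm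
  have hXbot : legendre g x ≠ ⊥ := by
    intro hbot
    have h0 : ((x 0 - g 0 : ℝ) : EReal) ≤ legendre g x := le_iSup (fun p : V => ((x p - g p : ℝ) : EReal)) 0
    rw [hbot, le_bot_iff] at h0
    exact (EReal.coe_ne_bot _) h0
  have hZbot : legendre g z ≠ ⊥ := by
    intro hbot
    have h0 : ((z 0 - g 0 : ℝ) : EReal) ≤ legendre g z := le_iSup (fun p : V => ((z p - g p : ℝ) : EReal)) 0
    rw [hbot, le_bot_iff] at h0
    exact (EReal.coe_ne_bot _) h0
  rw [hYM] at hy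
  obtain ⟨s, t, hs, ht, hst⟩ := pick_aux l M hl0 hl1 _ _ hXbot hZbot hy
  -- points where the affine minorants exceed g
  obtain ⟨p₁, hp₁⟩ : ∃ p : V, s < x p - g p := by
    rw [legendre, lt_iSup_iff] at hs
    obtain ⟨p, hp⟩ := hs
    exact ⟨p, by exact_mod_cast hp⟩
  obtain ⟨p₂, hp₂⟩ : ∃ p : V, t < z p - g p := by
    rw [legendre, lt_iSup_iff] at ht
    obtain ⟨p, hp⟩ := ht
    exact ⟨p, by exact_mod_cast hp⟩
  -- uniform upper bound at y
  have hbound : ∀ p : V, y p - g p ≤ M := by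
    intro p
    have h0 : ((y p - g p : ℝ) : EReal) ≤ legendre g y := le_iSup (fun q : V => ((y q - g q : ℝ) : EReal)) p
    rw [hYM] at h0
    exact_mod_cast h0
  have hyapp : ∀ p : V, y p = (1 - l) * x p + l * z p := by
    intro p
    simp [hydef]
  refine ⟨fun p => max (g p) (x p - s), fun p => max (g p) (z p - t), ?_, ?_, ?_, ?_, ?_⟩
  · intro a b
    refine le_trans (abs_max_sub_max_le_max _ _ _ _) (max_le (hglip a b) ?_)
    have := dualBall_abs_le hx (a - b)
    rw [map_sub] at this
    calc |(x a - s) - (x b - s)| = |x a - x b| := by ring_nf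
    _ ≤ ‖a - b‖ := this
  · intro a b
    refine le_trans (abs_max_sub_max_le_max _ _ _ _) (max_le (hglip a b) ?_)
    have := dualBall_abs_le hz (a - b)
    rw [map_sub] at this
    calc |(z a - t) - (z b - t)| = |z a - z b| := by ring_nf
    _ ≤ ‖a - b‖ := this
  · intro hEq
    have h1 := congrFun hEq p₁
    have h2 : x p₁ - s ≤ g p₁ := h1 ▸ le_max_right (g p₁) (x p₁ - s)
    linarith
  · intro hEq
    have h1 := congrFun hEq p₂
    have h2 : z p₂ - t ≤ g p₂ := h1 ▸ le_max_right (g p₂) (z p₂ - t)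
    linarith
  · intro p
    show g p = min (max (g p) (x p - s)) (max (g p) (z p - t))
    rcases le_or_gt (x p - s) (g p) with hc | hc
    · rw [max_eq_left hc, min_eq_left (le_max_left _ _)]
    · have hzt : z p - t ≤ g p := by
        by_contra hzc
        push_neg at hzc
        have h1 : s < x p - g p := by linarith
        have h2 : t < z p - g p := by linarith
        have h3 : (1 - l) * s + l * t < y p - g p := by
          rw [hyapp p]
          nlinarith
        have := hbound p
        linarith
      rw [max_eq_left hzt, min_eq_right (le_max_left _ _)]
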